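/- arXiv:2207.01589 — 3 statements merged into one kernel-verified Lean document; each statement's English description precedes it below -/
import Mathlib

section
/- Let I be a repeated matching instance with n agents/items and T rounds such that T mod n ∈ {0, 1, 2}, and in which all valuations are non-negative (goods), i.e., v_i(g,t) ≥ 0 for every agent i, item g, and t ∈ {1,...,T}. Then there exists a repeated matching of I that is EF1. -/
/-!
Split the `T = q * n + r` rounds into `q` cycles of the cyclic matchings `i ↦ i + b`, after
which every agent holds exactly `q` copies of every item, followed by `r ≤ 2` extra rounds.
For `r ≤ 1`, removing the (at most one) extra item of `j` leaves `j` with `q` copies of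
everything. For `r = 2`, the first extra matching `π` is a serial dictatorship in the order
`0, 1, …, n - 1` for the values of the `(q + 1)`-st copies, and the second one `ρ` a serial
dictatorship in the reverse order for the marginal values given `π`. Agent `i` then does not
envy a later agent `j` once `ρ j` is removed (`i` picked `π i` before `π j` was picked), nor an
earlier one once `π j` is removed (`i` picked `ρ i`, with `π i` in hand, before `ρ j`).
-/

open Finset

/-- The number of rounds in which agent `i` is matched to item `g`
under the repeated matching `A` (a sequence of `T` bijections from agents to items). -/
def mult {α β : Type*} [DecidableEq β] {T : ℕ} (A : Fin T → α ≃ β) (i : α) (g : β) : ℕ :=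
  (Finset.univ.filter fun t : Fin T => A t i = g).card

/-- The value of a bundle with multiplicities `B` under the valuation `v`,
where `v g t` is the value of the `t`-th copy of item `g`. -/
def bundleValue {β : Type*} [Fintype β] (v : β → ℕ → ℝ) (B : β → ℕ) : ℝ :=
  ∑ g : β, ∑ t ∈ Finset.range (B g), v g (t + 1)

/-- The social welfare of a repeated matching. -/
def SW {α β : Type*} [Fintype α] [Fintype β] [DecidableEq β] {T : ℕ}
    (v : α → β → ℕ → ℝ) (A : Fin T → α ≃ β) : ℝ :=
  ∑ i : α, bundleValue (v i) (mult A i)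

/-- Remove one copy of `g` from the bundle `B` (if present; otherwise leave `B` intact). -/
def removeOne {β : Type*} [DecidableEq β] (B : β → ℕ) (g : β) : β → ℕ :=
  fun g' => if g' = g then B g' - 1 else B g'

/-- `EF1`: every agent `i` values her bundle at least as much as any other agent `j`'s
bundle after removing one copy of some item. -/
def EF1 {α β : Type*} [Fintype β] [DecidableEq β] {T : ℕ}
    (v : α → β → ℕ → ℝ) (A : Fin T → α ≃ β) : Prop :=
  ∀ i j : α, ∃ g : β,
    bundleValue (v i) (mult A i) ≥ bundleValue (v i) (removeOne (mult A j) g)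

theorem exists_serialDictatorship {ι β α : Type*} [LinearOrder ι] [Finite ι] [Finite β]
    [Nonempty (ι ≃ β)] [LinearOrder α] (u : ι → β → α) :
    ∃ σ : ι ≃ β, ∀ i j, i ≤ j → u i (σ j) ≤ u i (σ i) := by
  -- Take `σ` with a lexicographically maximal value profile: swapping the items of `i < j`
  -- changes no value before position `i`.
  obtain ⟨σ, hσ⟩ := Finite.exists_max fun σ : ι ≃ β => toLex fun k => u k (σ k)
  refine ⟨σ, fun i j hij => ?_⟩
  refine Pi.apply_le_of_toLex (hσ ((Equiv.swap i j).trans σ)) (fun k hk => ?_) |>.trans_eq' ?_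
  · simp [Equiv.swap_apply_of_ne_of_ne hk.ne (hk.trans_le hij).ne]
  · simp

theorem exists_serialDictatorship_reverse {ι β α : Type*} [LinearOrder ι] [Finite ι] [Finite β]
    [Nonempty (ι ≃ β)] [LinearOrder α] (u : ι → β → α) :
    ∃ σ : ι ≃ β, ∀ i j, j ≤ i → u i (σ j) ≤ u i (σ i) := by
  have : Nonempty (ιᵒᵈ ≃ β) := ‹Nonempty (ι ≃ β)›
  obtain ⟨σ, hσ⟩ := exists_serialDictatorship (ι := ιᵒᵈ) fun i => u (OrderDual.ofDual i)
  exact ⟨OrderDual.toDual.trans σ, fun i j hji => hσ _ _ hji⟩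

section Bundles

variable {β : Type*}

theorem bundleValue_add_single [Fintype β] [DecidableEq β] (v : β → ℕ → ℝ) (B : β → ℕ)
    (g : β) :
    bundleValue v (B + Pi.single g 1) = bundleValue v B + v g (B g + 1) := by
  rw [bundleValue, bundleValue, ← Fintype.sum_ite_eq' g (fun g' => v g' (B g' + 1)),
    ← sum_add_distrib]
  refine sum_congr rfl fun g' _ => ?_
  obtain rfl | hg := eq_or_ne g' g
  · simp [sum_range_succ]
  · simp [hg]

theorem bundleValue_mono [Fintype β] {v : β → ℕ → ℝ} {N : ℕ}
    (hv : ∀ g t, 1 ≤ t → t ≤ N → 0 ≤ v g t)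
    {B B' : β → ℕ} (hB : B' ≤ B) (hN : ∀ g, B g ≤ N) : bundleValue v B' ≤ bundleValue v B :=
  sum_le_sum fun g _ => sum_le_sum_of_subset_of_nonneg (range_subset_range.mpr (hB g))
    fun t ht _ => hv g (t + 1) (by omega) (by have := mem_range.mp ht; have := hN g; omega)

theorem removeOne_le [DecidableEq β] (B : β → ℕ) (g : β) : removeOne B g ≤ B := by
  intro g'
  simp only [removeOne]
  split_ifs <;> omega

theorem removeOne_add_single [DecidableEq β] (B : β → ℕ) (g : β) :
    removeOne (B + Pi.single g 1) g = B := by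
  ext g'
  obtain rfl | hg := eq_or_ne g' g <;> simp [removeOne, *]

end Bundles

section Mult

variable {α β : Type*} [DecidableEq β] {T : ℕ}

theorem mult_eq_sum_single (A : Fin T → α ≃ β) (i : α) :
    mult A i = ∑ t, Pi.single (A t i) 1 := by
  ext g
  rw [mult, card_filter]
  simp [Finset.sum_apply, Pi.single_apply, eq_comm]

theorem mult_le (A : Fin T → α ≃ β) (i : α) (g : β) : mult A i g ≤ T :=
  (card_filter_le _ _).trans_eq (card_fin T)

theorem mult_append {T' : ℕ} (A : Fin T → α ≃ β) (A' : Fin T' → α ≃ β) (i : α) :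
    mult (Fin.append A A') i = mult A i + mult A' i := by
  simp only [mult_eq_sum_single, Fin.sum_univ_add, Fin.append_left, Fin.append_right]

theorem EF1_of_forall_exists_removeOne_le [Fintype β] {v : α → β → ℕ → ℝ} {A : Fin T → α ≃ β}
    (hv : ∀ i g t, 1 ≤ t → t ≤ T → 0 ≤ v i g t)
    (h : ∀ i j, ∃ g, removeOne (mult A j) g ≤ mult A i) : EF1 v A := fun i j =>
  (h i j).imp fun _ hg => bundleValue_mono (hv i) hg (mult_le A i)

end Mult

-- Round `a * n + b` matches agent `i` to item `i + b`.
def rotationRounds (q n : ℕ) [NeZero n] : Fin (q * n) → Fin n ≃ Fin n :=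
  fun t => Equiv.addRight (finProdFinEquiv.symm t).2

theorem mult_rotationRounds (q n : ℕ) [NeZero n] (i : Fin n) :
    mult (rotationRounds q n) i = fun _ => q := by
  have hcycle : ∑ b : Fin n, Pi.single (i + b) 1 = fun _ : Fin n => 1 :=
    (Equiv.sum_comp (Equiv.addLeft i) fun g => Pi.single g 1).trans (univ_sum_single _)
  rw [mult_eq_sum_single, ← finProdFinEquiv.sum_comp, Fintype.sum_prod_type]
  ext g
  simp [rotationRounds, hcycle]

section RotationThenExtraRounds

variable {n : ℕ} [NeZero n] (q : ℕ) {v : Fin n → Fin n → ℕ → ℝ}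

theorem EF1_rotationRounds (hv : ∀ i g t, 1 ≤ t → t ≤ q * n → 0 ≤ v i g t) :
    EF1 v (rotationRounds q n) :=
  EF1_of_forall_exists_removeOne_le hv fun i j =>
    ⟨i, by simpa only [mult_rotationRounds] using removeOne_le _ i⟩

theorem EF1_rotationRounds_append_refl (hv : ∀ i g t, 1 ≤ t → t ≤ q * n + 1 → 0 ≤ v i g t) :
    EF1 v (Fin.append (rotationRounds q n) ![Equiv.refl _]) := by
  refine EF1_of_forall_exists_removeOne_le hv fun i j => ⟨j, ?_⟩
  simp only [mult_append, mult_rotationRounds, mult_eq_sum_single ![Equiv.refl _],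
    Fin.sum_univ_one, Matrix.cons_val_zero, Equiv.refl_apply, removeOne_add_single]
  exact le_self_add

theorem exists_EF1_rotationRounds_append_two
    (hv : ∀ i g t, 1 ≤ t → t ≤ q * n + 2 → 0 ≤ v i g t) :
    ∃ π ρ : Fin n ≃ Fin n, EF1 v (Fin.append (rotationRounds q n) ![π, ρ]) := by
  set Q : Fin n → ℕ := fun _ => q
  obtain ⟨π, hπ⟩ := exists_serialDictatorship fun i g => v i g (q + 1)
  obtain ⟨ρ, hρ⟩ := exists_serialDictatorship_reverse
    fun i g => v i g ((Q + Pi.single (π i) 1 : Fin n → ℕ) g + 1)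
  refine ⟨π, ρ, fun i j => ?_⟩
  have hmult : ∀ k, mult (Fin.append (rotationRounds q n) ![π, ρ]) k
      = Q + Pi.single (π k) 1 + Pi.single (ρ k) 1 := fun k => by
    simp [mult_append, mult_rotationRounds, mult_eq_sum_single ![π, ρ], add_assoc, Q]
  have hmono : ∀ {B' : Fin n → ℕ} (a b : Fin n), B' ≤ Q + Pi.single a 1 + Pi.single b 1 →
      bundleValue (v i) B' ≤ bundleValue (v i) (Q + Pi.single a 1 + Pi.single b 1) := by
    intro B' a b hB
    refine bundleValue_mono (hv i) hB fun g => ?_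
    have : q ≤ q * n := Nat.le_mul_of_pos_right q i.pos
    simp only [Pi.add_apply, Pi.single_apply, Q]
    split_ifs <;> omega
  rw [hmult, hmult]
  rcases le_total i j with hij | hji
  · refine ⟨ρ j, ?_⟩
    rw [removeOne_add_single]
    calc bundleValue (v i) (Q + Pi.single (π j) 1)
        = bundleValue (v i) Q + v i (π j) (q + 1) := bundleValue_add_single _ _ _
      _ ≤ bundleValue (v i) Q + v i (π i) (q + 1) := by gcongr; exact hπ i j hij
      _ = bundleValue (v i) (Q + Pi.single (π i) 1) := (bundleValue_add_single _ _ _).symm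
      _ ≤ _ := hmono (π i) (ρ i) le_self_add
  · refine ⟨π j, ?_⟩
    rw [add_right_comm Q (Pi.single (π j) 1), removeOne_add_single]
    calc bundleValue (v i) (Q + Pi.single (ρ j) 1)
        ≤ bundleValue (v i) (Q + Pi.single (π i) 1 + Pi.single (ρ j) 1) :=
          hmono (π i) (ρ j) (add_le_add_left le_self_add _)
      _ ≤ bundleValue (v i) (Q + Pi.single (π i) 1 + Pi.single (ρ i) 1) := by
          rw [bundleValue_add_single _ _ (ρ j), bundleValue_add_single _ _ (ρ i)]
          gcongr
          exact hρ i j hji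

end RotationThenExtraRounds

/-- For goods (non-negative valuations) with `T mod n ∈ {0,1,2}`, an EF1 repeated
matching exists. -/
theorem stmt5 (n T : ℕ) (hmod : T % n = 0 ∨ T % n = 1 ∨ T % n = 2)
    (v : Fin n → Fin n → ℕ → ℝ)
    (hnonneg : ∀ (i g : Fin n) (t : ℕ), 1 ≤ t → t ≤ T → 0 ≤ v i g t) :
    ∃ A : Fin T → Fin n ≃ Fin n, EF1 v A := by
  rcases Nat.eq_zero_or_pos n with rfl | hn
  · exact ⟨fun _ => Equiv.refl _, fun i => i.elim0⟩
  have : NeZero n := NeZero.of_pos hn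
  obtain ⟨q, hT⟩ : ∃ q, T = q * n + T % n := ⟨T / n, (Nat.div_add_mod' T n).symm⟩
  rcases hmod with h | h | h <;> rw [h] at hT <;> subst hT
  · exact ⟨rotationRounds q n, EF1_rotationRounds q hnonneg⟩
  · exact ⟨_, EF1_rotationRounds_append_refl q hnonneg⟩
  · obtain ⟨π, ρ, hA⟩ := exists_EF1_rotationRounds_append_two q hnonneg
    exact ⟨_, hA⟩
end

section
/- Let I be a repeated matching instance with n agents/items and T rounds in which all agents have the same valuation function v (identical valuations), with no sign restriction on v (mixed items). Then there exists a repeated matching of I that is swapEF. -/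
open Finset

/-- Replace one copy of `gout` by one copy of `gin` in the bundle `B`. -/
def swapBundle {β : Type*} [DecidableEq β] (B : β → ℕ) (gout gin : β) : β → ℕ :=
  fun g => (B g + if g = gin then 1 else 0) - (if g = gout then 1 else 0)

/-- `swapEF`: for every pair of agents `i, j`, either `i` does not envy `j`, or the
envy disappears after swapping a copy of some item of `i` with a copy of some item
of `j`. -/
def swapEF {α β : Type*} [Fintype β] [DecidableEq β] {T : ℕ}
    (v : α → β → ℕ → ℝ) (A : Fin T → α ≃ β) : Prop :=
  ∀ i j : α,
    bundleValue (v i) (mult A i) ≥ bundleValue (v i) (mult A j) ∨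
    ∃ gi gj : β, 1 ≤ mult A i gi ∧ 1 ≤ mult A j gj ∧
      bundleValue (v i) (swapBundle (mult A i) gi gj) ≥
        bundleValue (v i) (swapBundle (mult A j) gj gi)

/-!
Restrict to *balanced* repeated matchings, in which any two agents receive each item numbers of
times differing by at most one; round robin is one. Replacing one copy of `a` by one copy of `b` in
agent `i`'s balanced bundle and doing the reverse in agent `j`'s changes the two values by exactly
opposite amounts `d` and `-d`, and since a `T`-regular bipartite multigraph is a union of `T`
perfect matchings (Hall), the exchanged multiplicities again come from a balanced repeated matching.

Take a balanced repeated matching minimising `∑ₖ v(A_k)²`. If `i` envies `j`, then, the two bundles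
having the same size, some such exchange has `d > 0`; minimality gives `d ≥ v(A_j) - v(A_i)`, so
the swap removes the envy.
-/

section
variable {α : Type*} [DecidableEq α] {T : ℕ}

lemma mult_cons (e : α ≃ α) (A : Fin T → α ≃ α) (i g : α) :
    mult (Fin.cons e A : Fin (T + 1) → α ≃ α) i g = (if e i = g then 1 else 0) + mult A i g := by
  simp only [mult, card_filter, Fin.sum_univ_succ, Fin.cons_zero, Fin.cons_succ]

variable [Fintype α]

lemma sum_mult_agent (A : Fin T → α ≃ α) (i : α) : ∑ g, mult A i g = T := by
  simp only [mult]
  rw [← card_eq_sum_card_fiberwise (fun _ _ => mem_univ _), card_univ, Fintype.card_fin]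

lemma sum_mult_item (A : Fin T → α ≃ α) (g : α) : ∑ i, mult A i g = T := by
  simp only [mult, card_filter]
  rw [sum_comm]
  simp [← Equiv.eq_symm_apply]

lemma card_le_card_biUnion_support {r : ℕ} (hr : 0 < r) (M : α → α → ℕ)
    (hrow : ∀ i, ∑ g, M i g = r) (hcol : ∀ g, ∑ i, M i g = r) (s : Finset α) :
    #s ≤ #(s.biUnion fun i => {g | 0 < M i g}) := by
  set N := s.biUnion fun i => {g | 0 < M i g}
  have hsupp : ∀ i ∈ s, ∑ g ∈ N, M i g = r := fun i hi => by
    rw [← hrow i]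
    refine sum_subset (subset_univ _) fun g _ hg => ?_
    by_contra hne
    exact hg (mem_biUnion.mpr ⟨i, hi, mem_filter.mpr ⟨mem_univ _, Nat.pos_of_ne_zero hne⟩⟩)
  refine Nat.le_of_mul_le_mul_right ?_ hr
  calc #s * r = ∑ i ∈ s, ∑ g ∈ N, M i g := by rw [sum_congr rfl hsupp, sum_const, smul_eq_mul]
    _ = ∑ g ∈ N, ∑ i ∈ s, M i g := sum_comm
    _ ≤ ∑ g ∈ N, ∑ i, M i g := sum_le_sum fun g _ => sum_le_sum_of_subset (subset_univ s)
    _ = #N * r := by rw [sum_congr rfl fun g _ => hcol g, sum_const, smul_eq_mul]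

theorem exists_mult_eq {r : ℕ} (M : α → α → ℕ)
    (hrow : ∀ i, ∑ g, M i g = r) (hcol : ∀ g, ∑ i, M i g = r) :
    ∃ A : Fin r → α ≃ α, mult A = M := by
  induction r generalizing M with
  | zero =>
    refine ⟨finZeroElim, funext fun i => funext fun g => ?_⟩
    simp [mult, (sum_eq_zero_iff.mp (hrow i)) g (mem_univ g)]
  | succ r ih =>
    obtain ⟨f, hf, hfM⟩ := (all_card_le_biUnion_card_iff_exists_injective _).mp
      (card_le_card_biUnion_support r.succ_pos M hrow hcol)
    simp only [mem_filter, mem_univ, true_and] at hfM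
    let e : α ≃ α := Equiv.ofBijective f (Finite.injective_iff_bijective.mp hf)
    have hle : ∀ i g, (if g = e i then 1 else 0) ≤ M i g := fun i g => by
      split_ifs with h
      · exact h ▸ hfM i
      · exact Nat.zero_le _
    obtain ⟨A, hA⟩ := ih (fun i g => M i g - if g = e i then 1 else 0)
      (fun i => by
        rw [sum_tsub_distrib _ fun g _ => hle i g, hrow i, sum_ite_eq', if_pos (mem_univ _),
          Nat.add_sub_cancel])
      (fun g => by
        rw [sum_tsub_distrib _ fun i _ => hle i g, hcol g]
        simp_rw [eq_comm (a := g), ← Equiv.eq_symm_apply, sum_ite_eq', if_pos (mem_univ _),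
          Nat.add_sub_cancel])
    refine ⟨Fin.cons e A, funext fun i => funext fun g => ?_⟩
    rw [mult_cons, hA]
    have := hle i g
    simp only [eq_comm (a := g)] at this ⊢
    omega

end

lemma exists_lt_of_sum_lt_sum_of_card_eq {ι κ R : Type*} [CommRing R] [LinearOrder R]
    [IsStrictOrderedRing R] {s : Finset ι} {t : Finset κ} (f : ι → R) (g : κ → R)
    (hst : #s = #t) (h : ∑ a ∈ s, f a < ∑ b ∈ t, g b) : ∃ a ∈ s, ∃ b ∈ t, f a < g b := by
  by_contra! H
  have hle : #s • ∑ b ∈ t, g b ≤ #s • ∑ a ∈ s, f a := by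
    calc #s • ∑ b ∈ t, g b = ∑ a ∈ s, ∑ b ∈ t, g b := by rw [sum_const]
      _ ≤ ∑ a ∈ s, ∑ _b ∈ t, f a := sum_le_sum fun a ha => sum_le_sum fun b hb => H a ha b hb
      _ = #s • ∑ a ∈ s, f a := by rw [hst, ← sum_const, sum_comm]
  rcases (#s).eq_zero_or_pos with h0 | hpos
  · rw [card_eq_zero.mp h0, card_eq_zero.mp (hst ▸ h0 : #t = 0)] at h
    simp at h
  · exact h.not_ge (le_of_nsmul_le_nsmul_right hpos.ne' hle)

section
variable {β : Type*} [Fintype β]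

lemma bundleValue_sub_bundleValue (v : β → ℕ → ℝ) {B B' : β → ℕ}
    (hB : ∀ g, B g ≤ B' g + 1) (hB' : ∀ g, B' g ≤ B g + 1) :
    bundleValue v B' - bundleValue v B =
      ∑ g with B g < B' g, v g (B' g) - ∑ g with B' g < B g, v g (B g) := by
  simp only [bundleValue, sum_filter, ← sum_sub_distrib]
  refine sum_congr rfl fun g _ => ?_
  obtain h | h | h : B' g = B g + 1 ∨ B g = B' g + 1 ∨ B' g = B g := by grind
  · rw [h, sum_range_succ]; simp
  · rw [h, sum_range_succ]; simp
  · simp [h]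

lemma exists_lt_of_bundleValue_lt (v : β → ℕ → ℝ) {B B' : β → ℕ}
    (hB : ∀ g, B g ≤ B' g + 1) (hB' : ∀ g, B' g ≤ B g + 1) (hsum : ∑ g, B g = ∑ g, B' g)
    (hlt : bundleValue v B < bundleValue v B') :
    ∃ a b, B a = B' a + 1 ∧ B' b = B b + 1 ∧ v a (B a) < v b (B' b) := by
  have hcard : #{g | B' g < B g} = #{g | B g < B' g} := by
    have hcast : ∀ g, (B g : ℤ) - B' g =
        (if B' g < B g then 1 else 0) - if B g < B' g then 1 else 0 := fun g => by
      split_ifs <;> grind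
    have := congrArg (fun x : ℕ => (x : ℤ)) hsum
    simp only [Nat.cast_sum] at this
    rw [← sub_eq_zero, ← sum_sub_distrib, sum_congr rfl fun g _ => hcast g, sum_sub_distrib,
      sum_boole, sum_boole, sub_eq_zero] at this
    exact_mod_cast this
  have hsub := bundleValue_sub_bundleValue v hB hB'
  obtain ⟨a, ha, b, hb, hab⟩ := exists_lt_of_sum_lt_sum_of_card_eq (fun g => v g (B g))
    (fun g => v g (B' g)) hcard (by linarith)
  simp only [mem_filter, mem_univ, true_and] at ha hb
  exact ⟨a, b, by grind, by grind, hab⟩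

variable [DecidableEq β]

lemma bundleValue_swapBundle (v : β → ℕ → ℝ) (B : β → ℕ) {a b : β} (hab : a ≠ b)
    (ha : 1 ≤ B a) :
    bundleValue v (swapBundle B a b) = bundleValue v B - v a (B a) + v b (B b + 1) := by
  have hdiff := bundleValue_sub_bundleValue v (B := B) (B' := swapBundle B a b)
    (fun g => by unfold swapBundle; split_ifs <;> omega)
    (fun g => by unfold swapBundle; split_ifs <;> omega)
  have hup : univ.filter (fun g => B g < swapBundle B a b g) = {b} := by
    ext g
    rw [mem_filter, mem_singleton, swapBundle]
    split_ifs <;> grind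
  have hdown : univ.filter (fun g => swapBundle B a b g < B g) = {a} := by
    ext g
    rw [mem_filter, mem_singleton, swapBundle]
    split_ifs <;> grind
  rw [hup, hdown, sum_singleton, sum_singleton] at hdiff
  rw [show swapBundle B a b b = B b + 1 by simp [swapBundle, hab.symm]] at hdiff
  linarith

lemma sum_swapBundle (B : β → ℕ) {a : β} (b : β) (ha : 1 ≤ B a) :
    ∑ g, swapBundle B a b g = ∑ g, B g := by
  have hcast : ∀ g, (swapBundle B a b g : ℤ) =
      B g + (if g = b then 1 else 0) - if g = a then 1 else 0 := fun g => by
    unfold swapBundle; split_ifs <;> grind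
  zify
  simp only [hcast, sum_sub_distrib, sum_add_distrib, sum_ite_eq', mem_univ, if_true]
  ring

end

section
variable {α : Type*} [Fintype α] [DecidableEq α] {T : ℕ}

def IsBalanced (A : Fin T → α ≃ α) : Prop :=
  ∀ i j g, mult A i g ≤ mult A j g + 1

def sumSqBundleValue (v : α → ℕ → ℝ) (A : Fin T → α ≃ α) : ℝ :=
  ∑ k, bundleValue v (mult A k) ^ 2

lemma exists_isBalanced_mult_eq_swapBundle {A : Fin T → α ≃ α} (hA : IsBalanced A) {i j a b : α}
    (ha : mult A i a = mult A j a + 1) (hb : mult A j b = mult A i b + 1) :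
    ∃ A' : Fin T → α ≃ α, IsBalanced A' ∧ mult A' i = swapBundle (mult A i) a b ∧
      mult A' j = swapBundle (mult A j) b a ∧ ∀ k, k ≠ i → k ≠ j → mult A' k = mult A k := by
  have hab : a ≠ b := by rintro rfl; omega
  set M : α → α → ℕ := fun k g => mult A (if g = a ∨ g = b then Equiv.swap i j k else k) g
  have hMi : M i = swapBundle (mult A i) a b := funext fun g => by
    simp only [M, swapBundle, Equiv.swap_apply_left]
    split_ifs <;> grind
  have hMj : M j = swapBundle (mult A j) b a := funext fun g => by
    simp only [M, swapBundle, Equiv.swap_apply_right]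
    split_ifs <;> grind
  have hMk : ∀ k, k ≠ i → k ≠ j → M k = mult A k := fun k hi hj => funext fun g => by
    simp [M, Equiv.swap_apply_of_ne_of_ne hi hj]
  have hrow : ∀ k, ∑ g, M k g = T := fun k => by
    by_cases hi : k = i
    · rw [hi, hMi, sum_swapBundle _ _ (by omega), sum_mult_agent]
    by_cases hj : k = j
    · rw [hj, hMj, sum_swapBundle _ _ (by omega), sum_mult_agent]
    rw [hMk k hi hj, sum_mult_agent]
  have hcol : ∀ g, ∑ k, M k g = T := fun g => by
    simp only [M]
    split_ifs
    · exact (Equiv.sum_comp (Equiv.swap i j) (fun k => mult A k g)).trans (sum_mult_item A g)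
    · exact sum_mult_item A g
  obtain ⟨A', hA'⟩ := exists_mult_eq M hrow hcol
  refine ⟨A', fun k k' g => ?_, hA' ▸ hMi, hA' ▸ hMj, fun k hi hj => hA' ▸ hMk k hi hj⟩
  rw [hA']
  exact hA _ _ g

lemma swapEF_of_isMin (v : α → ℕ → ℝ) {A : Fin T → α ≃ α} (hA : IsBalanced A)
    (hmin : ∀ A' : Fin T → α ≃ α, IsBalanced A' → sumSqBundleValue v A ≤ sumSqBundleValue v A') :
    swapEF (fun _ : α => v) A := by
  intro i j
  by_cases hle : bundleValue v (mult A j) ≤ bundleValue v (mult A i)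
  · exact Or.inl hle
  right
  push Not at hle
  obtain ⟨a, b, ha, hb, hvab⟩ := exists_lt_of_bundleValue_lt v (hA i j) (hA j i)
    (by rw [sum_mult_agent, sum_mult_agent]) hle
  have hij : i ≠ j := by rintro rfl; exact hle.false
  have hab : a ≠ b := by rintro rfl; omega
  obtain ⟨A', hA', hi, hj, hk⟩ := exists_isBalanced_mult_eq_swapBundle hA ha hb
  set d := v b (mult A j b) - v a (mult A i a)
  set Wi := bundleValue v (mult A i)
  set Wj := bundleValue v (mult A j)
  have hWi : bundleValue v (swapBundle (mult A i) a b) = Wi + d := by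
    rw [bundleValue_swapBundle v _ hab (by omega), ← hb]; ring
  have hWj : bundleValue v (swapBundle (mult A j) b a) = Wj - d := by
    rw [bundleValue_swapBundle v _ hab.symm (by omega), ← ha]; ring
  have hpot : sumSqBundleValue v A' - sumSqBundleValue v A =
      ((Wi + d) ^ 2 - Wi ^ 2) + ((Wj - d) ^ 2 - Wj ^ 2) := by
    rw [sumSqBundleValue, sumSqBundleValue, ← sum_sub_distrib,
      Fintype.sum_eq_add i j hij fun k hne => by rw [hk k hne.1 hne.2, sub_self], hi, hj, hWi, hWj]
  have hgap : 0 ≤ Wi - Wj + d := by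
    refine le_of_mul_le_mul_left ?_ (sub_pos.mpr hvab)
    nlinarith [hmin A' hA']
  refine ⟨a, b, by omega, by omega, ?_⟩
  simp only [hWi, hWj]
  linarith [sub_pos.mpr hvab]

theorem exists_swapEF_of_isBalanced (v : α → ℕ → ℝ) {A₀ : Fin T → α ≃ α} (h₀ : IsBalanced A₀) :
    ∃ A : Fin T → α ≃ α, swapEF (fun _ : α => v) A := by
  classical
  obtain ⟨A, hA, hmin⟩ := exists_min_image {A | IsBalanced A} (sumSqBundleValue v)
    ⟨A₀, by simpa using h₀⟩
  simp only [mem_filter, mem_univ, true_and] at hA hmin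
  exact ⟨A, swapEF_of_isMin v hA hmin⟩

end

lemma mult_addRight_ofNat {n : ℕ} [NeZero n] (T : ℕ) (i g : Fin n) :
    mult (fun t : Fin T => Equiv.addRight (Fin.ofNat n t)) i g =
      T / n + if (g - i : Fin n).val < T % n then 1 else 0 := by
  have hiff : ∀ x : ℕ, i + Fin.ofNat n x = g ↔ x ≡ (g - i : Fin n).val [MOD n] := fun x => by
    rw [← eq_sub_iff_add_eq', Fin.ext_iff, Fin.val_ofNat, Nat.ModEq,
      Nat.mod_eq_of_lt (g - i).isLt]
  rw [← Nat.mod_eq_of_lt (g - i).isLt, ← Nat.count_modEq_card T (NeZero.pos n),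
    Nat.count_eq_card_filter_range, mult, card_filter, card_filter]
  simp only [Equiv.coe_addRight, hiff]
  exact Fin.sum_univ_eq_sum_range (fun x => if x ≡ (g - i : Fin n).val [MOD n] then 1 else 0) T

lemma exists_isBalanced_fin (n T : ℕ) : ∃ A : Fin T → Fin n ≃ Fin n, IsBalanced A := by
  rcases n.eq_zero_or_pos with rfl | hn
  · exact ⟨fun _ => Equiv.refl _, fun i => i.elim0⟩
  have : NeZero n := ⟨hn.ne'⟩
  refine ⟨fun t => Equiv.addRight (Fin.ofNat n t), fun i j g => ?_⟩
  rw [mult_addRight_ofNat, mult_addRight_ofNat]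
  split_ifs <;> omega

/-- For identical (arbitrary real-valued, i.e. mixed) valuations, a swapEF repeated
matching exists. -/
theorem stmt12 (n T : ℕ) (v : Fin n → ℕ → ℝ) :
    ∃ A : Fin T → Fin n ≃ Fin n, swapEF (fun _ : Fin n => v) A := by
  obtain ⟨A, hA⟩ := exists_isBalanced_fin n T
  exact exists_swapEF_of_isBalanced v hA
end

section
/- Let I be a repeated matching instance with n agents/items where n ≤ 5, any number of rounds T, and arbitrary real-valued valuations (mixed items). Then there exists a repeated matching of I that is swapEF. -/
open Finset

/-!
Rotate the agents cyclically: in round `t` agent `i` gets item `i + t (mod n)`. Writing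
`T = q n + r`, every agent `i` then receives `q` copies of each item plus one extra copy of each
item of a set `Eᵢ` of `r` items. Envy of `i` towards `j` therefore only concerns the values `u g` of
the `(q+1)`-st copies of the items of `Eᵢ \ Eⱼ` and `Eⱼ \ Eᵢ`. These two sets have the same size
`k`, and `2k ≤ n` since `Eᵢ \ Eⱼ` lies in `Eᵢ` and `Eⱼ \ Eᵢ` outside it, so `k ≤ 2` when `n ≤ 5`.
Swapping the item `a` of `Eᵢ \ Eⱼ` with least `u` against the item `d` of `Eⱼ \ Eᵢ` with largest
`u` changes the envy by `2 (u d - u a) ≥ k (u d - u a)`, which is at least the envy.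
-/

namespace Finset

variable {β M : Type*} [DecidableEq β] [AddCommGroup M]

lemma card_sdiff_le_two_of_card_eq [Fintype β] (hβ : Fintype.card β ≤ 5) {S U : Finset β}
    (h : #S = #U) : #(S \ U) ≤ 2 := by
  have hS : #(S \ U) ≤ #S := card_le_card sdiff_subset
  have hU : #(S \ U) ≤ #Uᶜ := card_le_card (sdiff_eq_inter_compl S U ▸ inter_subset_right)
  rw [card_compl] at hU
  omega

lemma exists_mem_sdiff_sum_sub_le_card_smul [LinearOrder M] [IsOrderedAddMonoid M]
    {S U : Finset β} (h : #S = #U) {u : β → M} (hlt : ∑ g ∈ S, u g < ∑ g ∈ U, u g) :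
    ∃ a ∈ S \ U, ∃ d ∈ U \ S, ∑ g ∈ U, u g - ∑ g ∈ S, u g ≤ #(S \ U) • (u d - u a) := by
  have hcard : #(U \ S) = #(S \ U) := card_sdiff_comm h.symm
  have hD : (U \ S).Nonempty := by
    by_contra! hD
    have hA : S \ U = ∅ := card_eq_zero.mp (by rw [← hcard, hD, card_empty])
    have hdiff := sum_sdiff_sub_sum_sdiff (s₁ := S) (s₂ := U) (f := u)
    rw [hD, hA, sum_empty, sub_zero] at hdiff
    exact (sub_pos.mpr hlt).ne hdiff
  have hA : (S \ U).Nonempty := by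
    rw [← card_pos, ← hcard]
    exact card_pos.mpr hD
  obtain ⟨d, hd, hdmax⟩ := exists_max_image (U \ S) u hD
  obtain ⟨a, ha, hamin⟩ := exists_min_image (S \ U) u hA
  refine ⟨a, ha, d, hd, ?_⟩
  calc ∑ g ∈ U, u g - ∑ g ∈ S, u g = ∑ g ∈ U \ S, u g - ∑ g ∈ S \ U, u g :=
        sum_sdiff_sub_sum_sdiff.symm
    _ ≤ #(U \ S) • u d - #(S \ U) • u a :=
        sub_le_sub (sum_le_card_nsmul _ _ _ hdmax) (card_nsmul_le_sum _ _ _ hamin)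
    _ = #(S \ U) • (u d - u a) := by rw [hcard, smul_sub]

lemma sum_insert_erase_of_mem_of_notMem {S : Finset β} {a d : β} (ha : a ∈ S) (hd : d ∉ S)
    (u : β → M) : ∑ g ∈ insert d (S.erase a), u g = ∑ g ∈ S, u g + u d - u a := by
  rw [sum_insert (fun h => hd (mem_of_mem_erase h)), sum_erase_eq_sub ha]
  abel

end Finset

section BalancedBundle

variable {β : Type*} [DecidableEq β]

def balancedBundle (q : ℕ) (S : Finset β) : β → ℕ :=
  fun g => q + if g ∈ S then 1 else 0

lemma bundleValue_balancedBundle [Fintype β] (w : β → ℕ → ℝ) (q : ℕ) (S : Finset β) :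
    bundleValue w (balancedBundle q S) = bundleValue w (fun _ => q) + ∑ g ∈ S, w g (q + 1) := by
  rw [bundleValue, bundleValue, ← Fintype.sum_ite_mem S, ← sum_add_distrib]
  refine sum_congr rfl fun g _ => ?_
  by_cases hg : g ∈ S <;> simp [balancedBundle, hg, sum_range_succ]

lemma swapBundle_balancedBundle (q : ℕ) {S : Finset β} {a d : β} (ha : a ∈ S) (hd : d ∉ S) :
    swapBundle (balancedBundle q S) a d = balancedBundle q (insert d (S.erase a)) := by
  have had : a ≠ d := ne_of_mem_of_not_mem ha hd
  funext g
  by_cases hga : g = a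
  · subst hga; simp [swapBundle, balancedBundle, had, ha]
  · by_cases hgd : g = d
    · subst hgd; simp [swapBundle, balancedBundle, hd, hga]
    · simp [swapBundle, balancedBundle, hga, hgd]

lemma balancedBundle_le_or_le_swap [Fintype β] (hβ : Fintype.card β ≤ 5) (w : β → ℕ → ℝ)
    (q : ℕ) {S U : Finset β} (h : #S = #U) :
    bundleValue w (balancedBundle q S) ≥ bundleValue w (balancedBundle q U) ∨
      ∃ a ∈ S, ∃ d ∈ U, bundleValue w (swapBundle (balancedBundle q S) a d) ≥
        bundleValue w (swapBundle (balancedBundle q U) d a) := by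
  set u : β → ℝ := fun g => w g (q + 1)
  simp only [bundleValue_balancedBundle]
  rcases le_or_gt (∑ g ∈ U, u g) (∑ g ∈ S, u g) with hle | hlt
  · exact Or.inl (by linarith)
  right
  obtain ⟨a, ha, d, hd, hexchange⟩ := exists_mem_sdiff_sum_sub_le_card_smul h hlt
  have hgain : 0 < u d - u a :=
    (nsmul_pos_iff (card_ne_zero_of_mem ha)).mp ((sub_pos.mpr hlt).trans_le hexchange)
  have hswap : ∑ g ∈ U, u g - ∑ g ∈ S, u g ≤ 2 • (u d - u a) :=
    hexchange.trans (nsmul_le_nsmul_left hgain.le (card_sdiff_le_two_of_card_eq hβ h))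
  rw [mem_sdiff] at ha hd
  refine ⟨a, ha.1, d, hd.1, ?_⟩
  rw [swapBundle_balancedBundle q ha.1 hd.2, swapBundle_balancedBundle q hd.1 ha.2,
    bundleValue_balancedBundle, bundleValue_balancedBundle,
    sum_insert_erase_of_mem_of_notMem ha.1 hd.2, sum_insert_erase_of_mem_of_notMem hd.1 ha.2]
  rw [two_nsmul] at hswap
  linarith

end BalancedBundle
section RepeatedMatching

variable {α β : Type*} [Fintype β] [DecidableEq β] {T : ℕ}

lemma sum_mult (A : Fin T → α ≃ β) (i : α) : ∑ g, mult A i g = T := by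
  simpa [mult] using (card_eq_sum_card_fiberwise (f := fun t => A t i) (s := univ) (t := univ)
    fun _ _ => mem_univ _).symm

theorem swapEF_of_mult_eq_or_eq_succ (hβ : Fintype.card β ≤ 5) (v : α → β → ℕ → ℝ)
    (A : Fin T → α ≃ β) (q : ℕ) (hA : ∀ i g, mult A i g = q ∨ mult A i g = q + 1) :
    swapEF v A := by
  set E : α → Finset β := fun i => {g | mult A i g = q + 1}
  have hmult : ∀ i, mult A i = balancedBundle q (E i) := fun i => funext fun g => by
    rcases hA i g with h | h <;> simp [balancedBundle, E, h]
  have hcard : ∀ i, Fintype.card β * q + #(E i) = T := fun i => by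
    rw [← sum_mult A i, hmult]
    simp [balancedBundle, sum_add_distrib]
  intro i j
  rw [hmult i, hmult j]
  rcases balancedBundle_le_or_le_swap hβ (v i) q (S := E i) (U := E j)
      (by linarith [hcard i, hcard j]) with
    h | ⟨a, ha, d, hd, h⟩
  · exact Or.inl h
  · exact Or.inr ⟨a, d, by simp [balancedBundle, ha], by simp [balancedBundle, hd], h⟩

end RepeatedMatching

lemma card_filter_fin_eq_count (p : ℕ → Prop) [DecidablePred p] (T : ℕ) :
    #{t : Fin T | p t} = Nat.count p T := by
  rw [Nat.count_eq_card_filter_range, card_filter, card_filter,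
    ← Fin.sum_univ_eq_sum_range (fun k => if p k then 1 else 0)]

section CyclicMatching

open Fin.NatCast

variable (n T : ℕ) [NeZero n]

def cyclicMatching : Fin T → Fin n ≃ Fin n :=
  fun t => Equiv.addRight ((t : ℕ) : Fin n)

lemma mult_cyclicMatching (i g : Fin n) :
    mult (cyclicMatching n T) i g = T / n + if ((g - i : Fin n) : ℕ) < T % n then 1 else 0 := by
  have hround : ∀ t : ℕ, i + (t : Fin n) = g ↔ t ≡ ((g - i : Fin n) : ℕ) [MOD n] := fun t => by
    rw [← CharP.natCast_eq_natCast (Fin n), Fin.cast_val_eq_self, eq_sub_iff_add_eq']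
  have hcount := Nat.count_modEq_card T (Nat.pos_of_neZero n) ((g - i : Fin n) : ℕ)
  rw [Nat.mod_eq_of_lt (g - i).isLt] at hcount
  rw [← hcount, ← card_filter_fin_eq_count]
  simp only [mult, cyclicMatching, Equiv.coe_addRight, hround]

end CyclicMatching

/-- For mixed items (arbitrary real-valued valuations) with at most five
agents/items, a swapEF repeated matching exists. -/
theorem stmt15 (n T : ℕ) (hn : n ≤ 5)
    (v : Fin n → Fin n → ℕ → ℝ) :
    ∃ A : Fin T → Fin n ≃ Fin n, swapEF v A := by
  rcases Nat.eq_zero_or_pos n with rfl | hpos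
  · exact ⟨fun _ => Equiv.refl _, fun i => i.elim0⟩
  have : NeZero n := ⟨hpos.ne'⟩
  refine ⟨cyclicMatching n T,
    swapEF_of_mult_eq_or_eq_succ (by simpa using hn) v _ (T / n) fun i g => ?_⟩
  rw [mult_cyclicMatching]
  split_ifs <;> simp
end
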